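/- arXiv:2505.07565 — 4 statements merged into one kernel-verified Lean document; each statement's English description precedes it below -/
import Mathlib

section
/- Let V be a countable type, μ : V → ℝ a weight with μ(x) > 0 for all x, and let m, C̃ > 0 and c ≥ 1 be real constants. Let P : ℝ → V → V → ℝ satisfy, for all t > 0 and all x, y ∈ V: (i) P(t, y, x) ≥ 0; (ii) P(t, y, x) ≤ C̃ · t^(−m/2); (iii) P(t, y, x) ≤ c · P(2t, y, x); (iv) the family x ↦ P(2t, y, x)·μ(x) is summable with ∑_{x∈V} P(2t, y, x) μ(x) ≤ 1. Then for every real r ≥ 1, every t > 0 and every y ∈ V, the family x ↦ P(t, y, x)^r μ(x) is summable and ∑_{x∈V} P(t, y, x)^r μ(x) ≤ c · C̃^(r−1) · t^(−(m/2)(r−1)); equivalently ‖P(t, y, ·)‖_{ℓ^r(V,μ)} ≤ (c · C̃^(r−1))^(1/r) · t^(−(m/2)(1−1/r)). -/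
/-! Interpolate between `ℓ^∞` and `ℓ^1`: the on-diagonal bound gives `P t y x ≤ K := C t^(-m/2)`,
so `P t y x ^ r ≤ K^(r-1) P t y x ≤ c K^(r-1) P (2t) y x`, and summing against `μ` costs at most
the factor `1` by sub-stochasticity at time `2t`. -/

open Real

theorem rpow_le_rpow_sub_one_mul_self {p K r : ℝ} (hp : 0 ≤ p) (hpK : p ≤ K) (hr : 1 ≤ r) :
    p ^ r ≤ K ^ (r - 1) * p := by
  rcases hp.eq_or_lt with rfl | hp
  · rw [zero_rpow (by linarith), mul_zero]
  calc p ^ r = p ^ (r - 1) * p := by rw [← rpow_add_one hp.ne']; ring_nf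
    _ ≤ K ^ (r - 1) * p := by gcongr

theorem summable_and_tsum_rpow_mul_le {ι : Type*} {f g w : ι → ℝ} {K a B r : ℝ}
    (hf : ∀ i, 0 ≤ f i) (hfK : ∀ i, f i ≤ K) (hfg : ∀ i, f i ≤ a * g i) (hw : ∀ i, 0 ≤ w i)
    (hK : 0 ≤ K) (ha : 0 ≤ a) (hg : Summable fun i => g i * w i) (hB : ∑' i, g i * w i ≤ B)
    (hr : 1 ≤ r) :
    Summable (fun i => f i ^ r * w i) ∧ ∑' i, f i ^ r * w i ≤ a * K ^ (r - 1) * B := by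
  have hpoint : ∀ i, f i ^ r * w i ≤ a * K ^ (r - 1) * (g i * w i) := fun i =>
    calc f i ^ r * w i ≤ K ^ (r - 1) * (a * g i) * w i := by
          refine mul_le_mul_of_nonneg_right ?_ (hw i)
          exact (rpow_le_rpow_sub_one_mul_self (hf i) (hfK i) hr).trans
            (mul_le_mul_of_nonneg_left (hfg i) (rpow_nonneg hK _))
      _ = a * K ^ (r - 1) * (g i * w i) := by ring
  have hmaj : Summable fun i => a * K ^ (r - 1) * (g i * w i) := hg.mul_left _
  have hsumm : Summable fun i => f i ^ r * w i :=
    hmaj.of_nonneg_of_le (fun i => mul_nonneg (rpow_nonneg (hf i) r) (hw i)) hpoint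
  refine ⟨hsumm, ?_⟩
  calc ∑' i, f i ^ r * w i ≤ ∑' i, a * K ^ (r - 1) * (g i * w i) := hsumm.tsum_le_tsum hpoint hmaj
    _ = a * K ^ (r - 1) * ∑' i, g i * w i := tsum_mul_left
    _ ≤ a * K ^ (r - 1) * B := by gcongr

theorem rpow_one_div_le_of_le_mul_rpow {S a t b r : ℝ} (hS : 0 ≤ S) (ha : 0 ≤ a) (ht : 0 ≤ t)
    (hr : 0 < r) (h : S ≤ a * t ^ (b * (r - 1))) :
    S ^ (1 / r) ≤ a ^ (1 / r) * t ^ (b * (1 - 1 / r)) :=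
  calc S ^ (1 / r) ≤ (a * t ^ (b * (r - 1))) ^ (1 / r) := by gcongr
    _ = a ^ (1 / r) * t ^ (b * (1 - 1 / r)) := by
      rw [mul_rpow ha (rpow_nonneg ht _), ← rpow_mul ht]
      congr 2
      field_simp

theorem heat_kernel_lp_bound_general {V : Type*} [Countable V] (μ : V → ℝ)
    (hμ : ∀ x, 0 < μ x) (m C c : ℝ) (hC : 0 < C) (hc : 1 ≤ c)
    (P : ℝ → V → V → ℝ)
    (hpos : ∀ t : ℝ, 0 < t → ∀ x y : V, 0 ≤ P t y x)
    (hub : ∀ t : ℝ, 0 < t → ∀ x y : V, P t y x ≤ C * t ^ (-(m / 2)))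
    (hdoub : ∀ t : ℝ, 0 < t → ∀ x y : V, P t y x ≤ c * P (2 * t) y x)
    (hsub : ∀ t : ℝ, 0 < t → ∀ y : V,
      Summable (fun x => P (2 * t) y x * μ x) ∧ (∑' x, P (2 * t) y x * μ x) ≤ 1) :
    ∀ r : ℝ, 1 ≤ r → ∀ t : ℝ, 0 < t → ∀ y : V,
      Summable (fun x => P t y x ^ r * μ x) ∧
      (∑' x, P t y x ^ r * μ x) ≤ c * C ^ (r - 1) * t ^ (-(m / 2) * (r - 1)) ∧
      (∑' x, P t y x ^ r * μ x) ^ (1 / r) ≤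
        (c * C ^ (r - 1)) ^ (1 / r) * t ^ (-(m / 2) * (1 - 1 / r)) := by
  intro r hr t ht y
  obtain ⟨hsumm, hle⟩ := summable_and_tsum_rpow_mul_le (fun x => hpos t ht x y)
    (fun x => hub t ht x y) (fun x => hdoub t ht x y) (fun x => (hμ x).le)
    (by positivity) (by linarith) (hsub t ht y).1 (hsub t ht y).2 hr
  have hbound : ∑' x, P t y x ^ r * μ x ≤ c * C ^ (r - 1) * t ^ (-(m / 2) * (r - 1)) := by
    rwa [mul_one, mul_rpow hC.le (rpow_nonneg ht.le _), ← rpow_mul ht.le, ← mul_assoc] at hle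
  refine ⟨hsumm, hbound, ?_⟩
  exact rpow_one_div_le_of_le_mul_rpow (tsum_nonneg fun x => mul_nonneg
    (rpow_nonneg (hpos t ht x y) r) (hμ x).le) (by positivity) ht.le (by linarith) hbound

/-- Theorem 2.1 (core): `ℓ^r` bounds for the heat kernel from the on-diagonal upper
bound, the Harnack (time-doubling) comparison and sub-stochasticity. -/
theorem heat_kernel_lp_bound {V : Type*} [Countable V] (μ : V → ℝ)
    (hμ : ∀ x, 0 < μ x) (m C c : ℝ) (hm : 0 < m) (hC : 0 < C) (hc : 1 ≤ c)
    (P : ℝ → V → V → ℝ)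
    (hpos : ∀ t : ℝ, 0 < t → ∀ x y : V, 0 ≤ P t y x)
    (hub : ∀ t : ℝ, 0 < t → ∀ x y : V, P t y x ≤ C * t ^ (-(m / 2)))
    (hdoub : ∀ t : ℝ, 0 < t → ∀ x y : V, P t y x ≤ c * P (2 * t) y x)
    (hsub : ∀ t : ℝ, 0 < t → ∀ y : V,
      Summable (fun x => P (2 * t) y x * μ x) ∧ (∑' x, P (2 * t) y x * μ x) ≤ 1) :
    ∀ r : ℝ, 1 ≤ r → ∀ t : ℝ, 0 < t → ∀ y : V,
      Summable (fun x => P t y x ^ r * μ x) ∧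
      (∑' x, P t y x ^ r * μ x) ≤ c * C ^ (r - 1) * t ^ (-(m / 2) * (r - 1)) ∧
      (∑' x, P t y x ^ r * μ x) ^ (1 / r) ≤
        (c * C ^ (r - 1)) ^ (1 / r) * t ^ (-(m / 2) * (1 - 1 / r)) :=
  heat_kernel_lp_bound_general μ hμ m C c hC hc P hpos hub hdoub hsub
end

section
/- Let V be a countable type, μ : V → ℝ a weight with μ(x) > 0 for all x, and K : V → V → ℝ with K(x,y) ≥ 0 for all x, y. Let a, r ∈ [1, ∞) and b ∈ (1, ∞) be real numbers with 1 + 1/b = 1/a + 1/r, and let A ≥ 0. Assume: (i) for every x ∈ V, the family y ↦ K(x,y)^r μ(y) is summable with ∑_{y} K(x,y)^r μ(y) ≤ A^r; (ii) for every y ∈ V, the family x ↦ K(x,y)^r μ(x) is summable with ∑_{x} K(x,y)^r μ(x) ≤ A^r; (iii) g : V → ℝ satisfies ∑_{y} |g(y)|^a μ(y) < ∞. Then for every x the family y ↦ K(x,y)|g(y)|μ(y) is summable, and ∑_{x∈V} ( ∑_{y∈V} K(x,y) |g(y)| μ(y) )^b μ(x) ≤ A^b · ( ∑_{y∈V} |g(y)|^a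 μ(y) )^{b/a}; equivalently ‖∑_y K(·,y) g(y) μ(y)‖_{ℓ^b(V,μ)} ≤ A · ‖g‖_{ℓ^a(V,μ)}. -/
/-!
Split `K g μ = (K^r |g|^a μ)^(1/b) (K^r μ)^(1/r - 1/b) (|g|^a μ)^(1/a - 1/b)`; the exponents are
nonnegative and sum to `1`, so Hölder's inequality in `y` together with the row bound gives
`(∑_y K |g| μ)^b ≤ A^(b-r) ‖g‖_a^(b-a) ∑_y K^r |g|^a μ`. Summing over `x` against `μ` and
exchanging the sums, the column bound turns the last factor into `A^r ‖g‖_a^a`.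
Everything is done in `ℝ≥0∞`, where Hölder and Tonelli hold without summability conditions;
since the resulting bound is finite, the real statement follows.
-/

open scoped ENNReal
open MeasureTheory

namespace ENNReal

theorem tsum_prod_rpow_le {α ι : Type*} (s : Finset ι) (f : ι → α → ℝ≥0∞) {p : ι → ℝ}
    (hp : ∑ i ∈ s, p i = 1) (hp_nonneg : ∀ i ∈ s, 0 ≤ p i) :
    ∑' a, ∏ i ∈ s, f i a ^ p i ≤ ∏ i ∈ s, (∑' a, f i a) ^ p i := by
  let _ : MeasurableSpace α := ⊤
  simpa only [lintegral_count] using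
    lintegral_prod_norm_pow_le (μ := (Measure.count : Measure α)) s
      (fun i _ => measurable_from_top.aemeasurable) hp hp_nonneg

theorem tsum_rpow_mul_rpow_mul_rpow_le {α : Type*} (u v w : α → ℝ≥0∞) {c s t : ℝ}
    (hc : 0 ≤ c) (hs : 0 ≤ s) (ht : 0 ≤ t) (hcst : c + s + t = 1) :
    ∑' i, u i ^ c * v i ^ s * w i ^ t ≤ (∑' i, u i) ^ c * (∑' i, v i) ^ s * (∑' i, w i) ^ t := by
  simpa [Fin.prod_univ_three] using
    tsum_prod_rpow_le Finset.univ ![u, v, w] (p := ![c, s, t])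
      (by simpa [Fin.sum_univ_three] using hcst) (by simp [Fin.forall_fin_succ, hc, hs, ht])

theorem mul_mul_eq_rpow_mul_rpow_mul_rpow (x y z : ℝ≥0∞) {r a c s t : ℝ} (hr : 0 ≤ r)
    (ha : 0 ≤ a) (hc : 0 ≤ c) (hs : 0 ≤ s) (ht : 0 ≤ t)
    (hx : r * (c + s) = 1) (hy : a * (c + t) = 1) (hz : c + s + t = 1) :
    x * y * z = (x ^ r * (y ^ a * z)) ^ c * (x ^ r * z) ^ s * (y ^ a * z) ^ t := by
  simp only [mul_rpow_of_nonneg _ _ hc, mul_rpow_of_nonneg _ _ hs, mul_rpow_of_nonneg _ _ ht,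
    ← rpow_mul]
  calc x * y * z = x ^ (r * c + r * s) * y ^ (a * c + a * t) * z ^ (c + s + t) := by
        rw [← mul_add, hx, ← mul_add, hy, hz, rpow_one, rpow_one, rpow_one]
    _ = _ := by
        rw [rpow_add_of_nonneg _ _ (by positivity) (by positivity),
          rpow_add_of_nonneg _ _ (by positivity) (by positivity),
          rpow_add_of_nonneg _ _ (by positivity) ht, rpow_add_of_nonneg _ _ hc hs]
        ring

theorem tsum_tsum_mul_mul_le {α β : Type*} (k : α → β → ℝ≥0∞) (F : β → ℝ≥0∞) (m : α → ℝ≥0∞)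
    {C : ℝ≥0∞} (hk : ∀ y, ∑' x, k x y * m x ≤ C) :
    ∑' x, (∑' y, k x y * F y) * m x ≤ C * ∑' y, F y :=
  calc ∑' x, (∑' y, k x y * F y) * m x = ∑' y, F y * ∑' x, k x y * m x := by
        simp_rw [← ENNReal.tsum_mul_right, ← ENNReal.tsum_mul_left]
        rw [ENNReal.tsum_comm]
        exact tsum_congr fun y => tsum_congr fun x => by ring
    _ ≤ ∑' y, F y * C := by gcongr with y; exact hk y
    _ = C * ∑' y, F y := by rw [ENNReal.tsum_mul_right, mul_comm]

section Young

variable {V : Type*} {m G : V → ℝ≥0∞} {a r b : ℝ} {A : ℝ≥0∞}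

theorem rpow_tsum_mul_mul_le (κ : V → ℝ≥0∞) (ha : 1 ≤ a) (hr : 1 ≤ r) (hb : 0 < b)
    (hrel : 1 + 1 / b = 1 / a + 1 / r) (hκ : ∑' y, κ y ^ r * m y ≤ A ^ r) :
    (∑' y, κ y * G y * m y) ^ b ≤
      (∑' y, κ y ^ r * (G y ^ a * m y)) * A ^ (b - r) * (∑' y, G y ^ a * m y) ^ (b / a - 1) := by
  have ha0 : 0 < a := by linarith
  have hr0 : 0 < r := by linarith
  have h1a : 1 / a ≤ 1 := (div_le_one ha0).mpr ha
  have h1r : 1 / r ≤ 1 := (div_le_one hr0).mpr hr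
  have hs : 0 ≤ 1 / r - 1 / b := by linarith
  have ht : 0 ≤ 1 / a - 1 / b := by linarith
  have hc : 0 ≤ 1 / b := by positivity
  have holder : ∑' y, κ y * G y * m y ≤ (∑' y, κ y ^ r * (G y ^ a * m y)) ^ (1 / b) *
      (A ^ r) ^ (1 / r - 1 / b) * (∑' y, G y ^ a * m y) ^ (1 / a - 1 / b) :=
    calc ∑' y, κ y * G y * m y
        = ∑' y, (κ y ^ r * (G y ^ a * m y)) ^ (1 / b) * (κ y ^ r * m y) ^ (1 / r - 1 / b) *
            (G y ^ a * m y) ^ (1 / a - 1 / b) :=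
          tsum_congr fun y => mul_mul_eq_rpow_mul_rpow_mul_rpow _ _ _ hr0.le ha0.le hc hs ht
            (by field_simp; ring) (by field_simp; ring) (by linarith)
      _ ≤ (∑' y, κ y ^ r * (G y ^ a * m y)) ^ (1 / b) * (∑' y, κ y ^ r * m y) ^ (1 / r - 1 / b) *
            (∑' y, G y ^ a * m y) ^ (1 / a - 1 / b) :=
          tsum_rpow_mul_rpow_mul_rpow_le _ _ _ hc hs ht (by linarith)
      _ ≤ _ := by gcongr
  calc (∑' y, κ y * G y * m y) ^ b ≤ _ := rpow_le_rpow holder hb.le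
    _ = _ := by
      rw [mul_rpow_of_nonneg _ _ hb.le, mul_rpow_of_nonneg _ _ hb.le, ← rpow_mul, ← rpow_mul,
        ← rpow_mul, ← rpow_mul]
      have hexp_A : r * ((1 / r - 1 / b) * b) = b - r := by field_simp
      have hexp_G : (1 / a - 1 / b) * b = b / a - 1 := by field_simp
      rw [one_div_mul_cancel hb.ne', rpow_one, hexp_A, hexp_G]

theorem tsum_rpow_tsum_mul_mul_le (k : V → V → ℝ≥0∞) (ha : 1 ≤ a) (hr : 1 ≤ r) (hb : 0 < b)
    (hrel : 1 + 1 / b = 1 / a + 1 / r) (hk_row : ∀ x, ∑' y, k x y ^ r * m y ≤ A ^ r)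
    (hk_col : ∀ y, ∑' x, k x y ^ r * m x ≤ A ^ r) :
    ∑' x, (∑' y, k x y * G y * m y) ^ b * m x ≤ A ^ b * (∑' y, G y ^ a * m y) ^ (b / a) := by
  set Ga := ∑' y, G y ^ a * m y
  have hrb : 0 ≤ b - r := by
    rw [sub_nonneg, ← one_div_le_one_div hb (by linarith)]
    linarith [(div_le_one (by linarith : (0 : ℝ) < a)).mpr ha]
  have hab : 0 ≤ b / a - 1 := by
    rw [sub_nonneg, one_le_div (by linarith), ← one_div_le_one_div hb (by linarith)]
    linarith [(div_le_one (by linarith : (0 : ℝ) < r)).mpr hr]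
  calc ∑' x, (∑' y, k x y * G y * m y) ^ b * m x
      ≤ ∑' x, (∑' y, k x y ^ r * (G y ^ a * m y)) * A ^ (b - r) * Ga ^ (b / a - 1) * m x := by
        gcongr with x
        exact rpow_tsum_mul_mul_le (k x) ha hr hb hrel (hk_row x)
    _ = A ^ (b - r) * Ga ^ (b / a - 1) * ∑' x, (∑' y, k x y ^ r * (G y ^ a * m y)) * m x := by
        rw [← ENNReal.tsum_mul_left]
        exact tsum_congr fun x => by ring
    _ ≤ A ^ (b - r) * Ga ^ (b / a - 1) * (A ^ r * Ga) := by
        gcongr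
        exact tsum_tsum_mul_mul_le _ _ _ hk_col
    _ = A ^ b * Ga ^ (b / a) := by
        rw [mul_mul_mul_comm, ← rpow_add_of_nonneg _ _ hrb (by linarith), sub_add_cancel]
        nth_rw 2 [← rpow_one Ga]
        rw [← rpow_add_of_nonneg _ _ hab zero_le_one, sub_add_cancel]

end Young

theorem ne_top_of_tsum_rpow_mul_ne_top {α : Type*} {f m : α → ℝ≥0∞} {b : ℝ} (hb : 0 < b)
    (h : ∑' x, f x ^ b * m x ≠ ⊤) {x : α} (hm : m x ≠ 0) : f x ≠ ⊤ := by
  intro hf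
  refine h (top_unique ((ENNReal.le_tsum x).trans' ?_))
  rw [hf, top_rpow_of_pos hb, top_mul hm]

theorem tsum_ofReal_rpow_mul_ofReal {α : Type*} {f w : α → ℝ} (hf : ∀ i, 0 ≤ f i)
    (hw : ∀ i, 0 ≤ w i) {p : ℝ} (hp : 0 ≤ p) (hs : Summable fun i => f i ^ p * w i) :
    ∑' i, ENNReal.ofReal (f i) ^ p * ENNReal.ofReal (w i) =
      ENNReal.ofReal (∑' i, f i ^ p * w i) := by
  rw [ofReal_tsum_of_nonneg (fun i => mul_nonneg (Real.rpow_nonneg (hf i) p) (hw i)) hs]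
  exact tsum_congr fun i => by
    rw [ofReal_mul (Real.rpow_nonneg (hf i) p), ofReal_rpow_of_nonneg (hf i) hp]

theorem tsum_ofReal_rpow_mul_ofReal_le {α : Type*} {f w : α → ℝ} (hf : ∀ i, 0 ≤ f i)
    (hw : ∀ i, 0 ≤ w i) {p C : ℝ} (hp : 0 ≤ p) (hC : 0 ≤ C)
    (hs : Summable fun i => f i ^ p * w i) (hle : ∑' i, f i ^ p * w i ≤ C ^ p) :
    ∑' i, ENNReal.ofReal (f i) ^ p * ENNReal.ofReal (w i) ≤ ENNReal.ofReal C ^ p := by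
  rw [tsum_ofReal_rpow_mul_ofReal hf hw hp hs, ofReal_rpow_of_nonneg hC hp]
  exact ofReal_le_ofReal hle

end ENNReal

theorem Real.summable_of_tsum_ofReal_ne_top {α : Type*} {F : α → ℝ} (hF : ∀ i, 0 ≤ F i)
    (h : ∑' i, ENNReal.ofReal (F i) ≠ ⊤) : Summable F :=
  (ENNReal.summable_toReal h).congr fun i => ENNReal.toReal_ofReal (hF i)

theorem Real.tsum_le_of_tsum_ofReal_le {α : Type*} {F : α → ℝ} {C : ℝ} (hF : ∀ i, 0 ≤ F i)
    (hC : 0 ≤ C) (h : ∑' i, ENNReal.ofReal (F i) ≤ ENNReal.ofReal C) : ∑' i, F i ≤ C := by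
  have hs := summable_of_tsum_ofReal_ne_top hF (ne_top_of_le_ne_top ENNReal.ofReal_ne_top h)
  rwa [← ENNReal.ofReal_tsum_of_nonneg hF hs, ENNReal.ofReal_le_ofReal_iff hC] at h

theorem Real.summable_and_tsum_rpow_tsum_mul_le_of_ofReal {α β : Type*} {F : α → β → ℝ}
    {μ : α → ℝ} {b C : ℝ} (hF : ∀ x y, 0 ≤ F x y) (hμ : ∀ x, 0 < μ x) (hb : 0 < b) (hC : 0 ≤ C)
    (h : ∑' x, (∑' y, ENNReal.ofReal (F x y)) ^ b * ENNReal.ofReal (μ x) ≤ ENNReal.ofReal C) :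
    (∀ x, Summable (F x)) ∧ ∑' x, (∑' y, F x y) ^ b * μ x ≤ C := by
  have hsum : ∀ x, Summable (F x) := fun x =>
    summable_of_tsum_ofReal_ne_top (hF x) <|
      ENNReal.ne_top_of_tsum_rpow_mul_ne_top hb (ne_top_of_le_ne_top ENNReal.ofReal_ne_top h)
        (ENNReal.ofReal_pos.mpr (hμ x)).ne'
  have hinner : ∀ x, 0 ≤ ∑' y, F x y := fun x => tsum_nonneg (hF x)
  refine ⟨hsum, tsum_le_of_tsum_ofReal_le (fun x => ?_) hC ?_⟩
  · have := hinner x; have := hμ x; positivity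
  · refine (tsum_congr fun x => ?_).trans_le h
    rw [ENNReal.ofReal_mul (by have := hinner x; positivity),
      ← ENNReal.ofReal_rpow_of_nonneg (hinner x) hb.le,
      ENNReal.ofReal_tsum_of_nonneg (hF x) (hsum x)]

theorem kernel_young_inequality_general {V : Type*} (μ : V → ℝ)
    (hμ : ∀ x, 0 < μ x) (K : V → V → ℝ) (hK : ∀ x y, 0 ≤ K x y)
    (a r b A : ℝ) (ha : 1 ≤ a) (hr : 1 ≤ r) (hb : 1 < b)
    (hrel : 1 + 1 / b = 1 / a + 1 / r) (hA : 0 ≤ A)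
    (hKx : ∀ x, Summable (fun y => K x y ^ r * μ y) ∧
      (∑' y, K x y ^ r * μ y) ≤ A ^ r)
    (hKy : ∀ y, Summable (fun x => K x y ^ r * μ x) ∧
      (∑' x, K x y ^ r * μ x) ≤ A ^ r)
    (g : V → ℝ) (hg : Summable (fun y => |g y| ^ a * μ y)) :
    (∀ x, Summable (fun y => K x y * |g y| * μ y)) ∧
    (∑' x, (∑' y, K x y * |g y| * μ y) ^ b * μ x) ≤
      A ^ b * (∑' y, |g y| ^ a * μ y) ^ (b / a) := by
  have hr0 : 0 ≤ r := by linarith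
  have hb0 : 0 < b := by linarith
  have hμ0 : ∀ x, 0 ≤ μ x := fun x => (hμ x).le
  have hga : 0 ≤ ∑' y, |g y| ^ a * μ y := tsum_nonneg fun y => by have := hμ0 y; positivity
  refine Real.summable_and_tsum_rpow_tsum_mul_le_of_ofReal
    (fun x y => by have := hK x y; have := hμ0 y; positivity) hμ hb0 (by positivity) ?_
  calc ∑' x, (∑' y, ENNReal.ofReal (K x y * |g y| * μ y)) ^ b * ENNReal.ofReal (μ x)
      = ∑' x, (∑' y, ENNReal.ofReal (K x y) * ENNReal.ofReal |g y| * ENNReal.ofReal (μ y)) ^ b *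
          ENNReal.ofReal (μ x) := by
        simp_rw [ENNReal.ofReal_mul (mul_nonneg (hK _ _) (abs_nonneg _)),
          ENNReal.ofReal_mul (hK _ _)]
    _ ≤ ENNReal.ofReal A ^ b *
          (∑' y, ENNReal.ofReal |g y| ^ a * ENNReal.ofReal (μ y)) ^ (b / a) :=
        ENNReal.tsum_rpow_tsum_mul_mul_le _ ha hr hb0 hrel
          (fun x => ENNReal.tsum_ofReal_rpow_mul_ofReal_le (hK x) hμ0 hr0 hA (hKx x).1 (hKx x).2)
          (fun y => ENNReal.tsum_ofReal_rpow_mul_ofReal_le (hK · y) hμ0 hr0 hA (hKy y).1 (hKy y).2)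
    _ = ENNReal.ofReal (A ^ b * (∑' y, |g y| ^ a * μ y) ^ (b / a)) := by
        rw [ENNReal.tsum_ofReal_rpow_mul_ofReal (fun y => abs_nonneg _) hμ0 (by linarith) hg,
          ENNReal.ofReal_rpow_of_nonneg hA hb0.le,
          ENNReal.ofReal_rpow_of_nonneg hga (by positivity),
          ENNReal.ofReal_mul (by positivity)]

/-- Theorem 2.2 (case 1 < b < ∞): discrete weighted Young-type convolution inequality
for a nonnegative kernel with two-sided `ℓ^r` bounds. -/
theorem kernel_young_inequality {V : Type*} [Countable V] (μ : V → ℝ)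
    (hμ : ∀ x, 0 < μ x) (K : V → V → ℝ) (hK : ∀ x y, 0 ≤ K x y)
    (a r b A : ℝ) (ha : 1 ≤ a) (hr : 1 ≤ r) (hb : 1 < b)
    (hrel : 1 + 1 / b = 1 / a + 1 / r) (hA : 0 ≤ A)
    (hKx : ∀ x, Summable (fun y => K x y ^ r * μ y) ∧
      (∑' y, K x y ^ r * μ y) ≤ A ^ r)
    (hKy : ∀ y, Summable (fun x => K x y ^ r * μ x) ∧
      (∑' x, K x y ^ r * μ x) ≤ A ^ r)
    (g : V → ℝ) (hg : Summable (fun y => |g y| ^ a * μ y)) :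
    (∀ x, Summable (fun y => K x y * |g y| * μ y)) ∧
    (∑' x, (∑' y, K x y * |g y| * μ y) ^ b * μ x) ≤
      A ^ b * (∑' y, |g y| ^ a * μ y) ^ (b / a) :=
  kernel_young_inequality_general μ hμ K hK a r b A ha hr hb hrel hA hKx hKy g hg
end

section
/- Let V be a countable type, μ : V → ℝ a weight with μ(x) > 0 for all x, and P : ℝ → V → V → ℝ such that for all t > 0 and all x, y ∈ V: P(t,x,y) ≥ 0, the family y ↦ P(t,x,y)μ(y) is summable, and ∑_{y∈V} P(t,x,y) μ(y) ≤ 1. Let T > 0, q ≥ 1 real, and g : ℝ → ℝ nondecreasing and globally Lipschitz. Let u₁, u₂, v₁, v₂ : [0,T] × V → ℝ be uniformly bounded, with u₁(t,x) ≥ 0 and u₂(t,x) ≥ 0 for all (t,x), each continuous as a map from [0,T] into ℓ^∞(V) (i.e., t ↦ sup_{x} |w(t,x) − w(t₀,x)| → 0 as t → t₀ for w ∈ {u₁,u₂,v₁,v₂}). Assume that for all t ∈ (0,T] and x ∈ V (all displayed sums and time integrals being convergent): u₁(t,x) ≤ ∑_y P(t,x,y) u₁(0,y) μ(y) + ∫₀ᵗ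 ∑_y P(t−s,x,y) g(v₁(s,y)) μ(y) ds; v₁(t,x) ≤ ∑_y P(t,x,y) v₁(0,y) μ(y) + ∫₀ᵗ ∑_y P(t−s,x,y) u₁(s,y)^q μ(y) ds; u₂(t,x) ≥ ∑_y P(t,x,y) u₂(0,y) μ(y) + ∫₀ᵗ ∑_y P(t−s,x,y) g(v₂(s,y)) μ(y) ds; v₂(t,x) ≥ ∑_y P(t,x,y) v₂(0,y) μ(y) + ∫₀ᵗ ∑_y P(t−s,x,y) u₂(s,y)^q μ(y) ds; and assume u₁(0,x) ≤ u₂(0,x) and v₁(0,x) ≤ v₂(0,x) for all x ∈ V. Then u₁(t,x) ≤ u₂(t,x) and v₁(t,x) ≤ v₂(t,x) for all t ∈ [0,T] and x ∈ V. -/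
open MeasureTheory Set
open scoped NNReal

/-!
Let `φ t = sup_x max [u₁ - u₂]₊ [v₁ - v₂]₊ (t, x)`; it is continuous because the data are
continuous into `ℓ^∞(V)`. Subtract the Duhamel inequalities of the supersolution from those of the
subsolution. The kernel is nonnegative with mass at most one, and `g` and `r ↦ r ^ q` are monotone
and Lipschitz on the range of the data, so the nonlinear terms differ by at most `C [v₁ - v₂]₊` and
`C [u₁ - u₂]₊`. Hence `φ t ≤ C ∫₀ᵗ φ`, and Grönwall's inequality gives `φ = 0`.
-/

theorem MonotoneOn.sub_le_mul_posPart {f : ℝ → ℝ} {s : Set ℝ} {K : ℝ≥0}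
    (hmono : MonotoneOn f s) (hlip : LipschitzOnWith K f s) {a b : ℝ} (ha : a ∈ s) (hb : b ∈ s) :
    f a - f b ≤ K * (a - b)⁺ := by
  rcases le_total a b with hab | hab
  · exact (sub_nonpos.2 (hmono ha hb hab)).trans (by positivity)
  · calc f a - f b ≤ dist (f a) (f b) := le_abs_self _
      _ ≤ K * dist a b := hlip.dist_le_mul a ha b hb
      _ = K * (a - b)⁺ := by rw [Real.dist_eq, abs_of_nonneg (sub_nonneg.2 hab),
          posPart_eq_self.2 (sub_nonneg.2 hab)]

theorem lipschitzOnWith_rpow_Icc {q : ℝ} (hq : 1 ≤ q) (M : ℝ) :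
    LipschitzOnWith (q * M ^ (q - 1)).toNNReal (fun r : ℝ => r ^ q) (Icc 0 M) := by
  refine (convex_Icc 0 M).lipschitzOnWith_of_nnnorm_hasDerivWithin_le
    (fun r _ => (Real.hasDerivAt_rpow_const (Or.inr hq)).hasDerivWithinAt) fun r hr => ?_
  rw [← NNReal.coe_le_coe, coe_nnnorm, Real.coe_toNNReal', Real.norm_eq_abs,
    abs_of_nonneg (by have := Real.rpow_nonneg hr.1 (q - 1); positivity)]
  exact le_max_of_le_left <| mul_le_mul_of_nonneg_left
    (Real.rpow_le_rpow hr.1 hr.2 (by linarith)) (by linarith)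

theorem rpow_sub_rpow_le_mul_posPart {q M a b : ℝ} (hq : 1 ≤ q) (ha : a ∈ Icc 0 M)
    (hb : b ∈ Icc 0 M) : a ^ q - b ^ q ≤ (q * M ^ (q - 1)).toNNReal * (a - b)⁺ :=
  ((Real.monotoneOn_rpow_Ici_of_exponent_nonneg (by linarith)).mono Icc_subset_Ici_self
    ).sub_le_mul_posPart (lipschitzOnWith_rpow_Icc hq M) ha hb

theorem nonpos_of_le_mul_integral {φ : ℝ → ℝ} {a b C : ℝ} (hC : 0 ≤ C)
    (hφ : ContinuousOn φ (Icc a b)) (hle : ∀ t ∈ Icc a b, φ t ≤ C * ∫ s in a..t, φ s) :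
    ∀ t ∈ Icc a b, φ t ≤ 0 := by
  intro t ht
  have hab : a ≤ b := ht.1.trans ht.2
  -- a continuous extension to all of `ℝ`, so that the fundamental theorem of calculus applies
  set φ' : ℝ → ℝ := fun s => φ (projIcc a b hab s)
  have hφ' : Continuous φ' := hφ.comp_continuous
    (continuous_subtype_val.comp continuous_projIcc) fun s => (projIcc a b hab s).2
  have hφ'φ : EqOn φ' φ (Icc a b) := fun s hs => by simp [φ', projIcc_of_mem hab hs]
  have hint : ∀ s ∈ Icc a b, ∫ r in a..s, φ' r = ∫ r in a..s, φ r := fun s hs =>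
    intervalIntegral.integral_congr <| hφ'φ.mono <| by
      rw [uIcc_of_le hs.1]; exact Icc_subset_Icc le_rfl hs.2
  have hderiv : ∀ s, HasDerivAt (fun u => ∫ r in a..u, φ' r) (φ' s) s :=
    fun s => (hφ'.integral_hasStrictDerivAt a s).hasDerivAt
  have hprimitive := le_gronwallBound_of_liminf_deriv_right_le (δ := 0) (ε := 0)
    (fun s _ => (hderiv s).continuousAt.continuousWithinAt)
    (fun s _ r hr => (hderiv s).hasDerivWithinAt.liminf_right_slope_le hr) (by simp)
    (fun s hs => by
      rw [add_zero, hint s (Ico_subset_Icc_self hs), hφ'φ (Ico_subset_Icc_self hs)]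
      exact hle s (Ico_subset_Icc_self hs)) t ht
  rw [gronwallBound_ε0_δ0, hint t ht] at hprimitive
  exact (hle t ht).trans (mul_nonpos_of_nonneg_of_nonpos hC hprimitive)

def SupNormContinuousOn {V : Type*} (w : ℝ → V → ℝ) (s : Set ℝ) : Prop :=
  ∀ t₀ ∈ s, ∀ ε : ℝ, 0 < ε → ∃ δ : ℝ, 0 < δ ∧
    ∀ t ∈ s, |t - t₀| < δ → ∀ x, |w t x - w t₀ x| ≤ ε

namespace SupNormContinuousOn

variable {V : Type*} {w w₁ w₂ : ℝ → V → ℝ} {s : Set ℝ}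

theorem of_abs_sub_le_add (h₁ : SupNormContinuousOn w₁ s) (h₂ : SupNormContinuousOn w₂ s)
    (h : ∀ t t₀ x, |w t x - w t₀ x| ≤ |w₁ t x - w₁ t₀ x| + |w₂ t x - w₂ t₀ x|) :
    SupNormContinuousOn w s := by
  intro t₀ ht₀ ε hε
  obtain ⟨δ₁, hδ₁, hw₁⟩ := h₁ t₀ ht₀ (ε / 2) (half_pos hε)
  obtain ⟨δ₂, hδ₂, hw₂⟩ := h₂ t₀ ht₀ (ε / 2) (half_pos hε)
  refine ⟨min δ₁ δ₂, lt_min hδ₁ hδ₂, fun t ht hδ x => ?_⟩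
  linarith [h t t₀ x, hw₁ t ht (hδ.trans_le (min_le_left _ _)) x,
    hw₂ t ht (hδ.trans_le (min_le_right _ _)) x]

theorem sub (h₁ : SupNormContinuousOn w₁ s) (h₂ : SupNormContinuousOn w₂ s) :
    SupNormContinuousOn (fun t x => w₁ t x - w₂ t x) s :=
  of_abs_sub_le_add h₁ h₂ fun t t₀ x => by rw [sub_sub_sub_comm]; exact abs_sub _ _

theorem max (h₁ : SupNormContinuousOn w₁ s) (h₂ : SupNormContinuousOn w₂ s) :
    SupNormContinuousOn (fun t x => Max.max (w₁ t x) (w₂ t x)) s :=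
  of_abs_sub_le_add h₁ h₂ fun _ _ _ =>
    (abs_max_sub_max_le_max _ _ _ _).trans (max_le_add_of_nonneg (abs_nonneg _) (abs_nonneg _))

theorem posPart (h : SupNormContinuousOn w s) : SupNormContinuousOn (fun t x => (w t x)⁺) s :=
  fun t₀ ht₀ ε hε => (h t₀ ht₀ ε hε).imp fun _ ⟨hδ, hw⟩ =>
    ⟨hδ, fun t ht htt₀ x => (abs_max_sub_max_le_abs _ _ 0).trans (hw t ht htt₀ x)⟩

theorem continuousOn_iSup [Nonempty V] (h : SupNormContinuousOn w s)
    (hbdd : ∀ t ∈ s, BddAbove (range (w t))) : ContinuousOn (fun t => ⨆ x, w t x) s := by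
  refine Metric.continuousOn_iff.2 fun t₀ ht₀ ε hε => ?_
  obtain ⟨δ, hδ, hw⟩ := h t₀ ht₀ (ε / 2) (half_pos hε)
  refine ⟨δ, hδ, fun t ht htt₀ => ?_⟩
  have hclose x := abs_le.1 (hw t ht (by rwa [← Real.dist_eq]) x)
  have h₁ : ⨆ x, w t x ≤ (⨆ x, w t₀ x) + ε / 2 :=
    ciSup_le fun x => by linarith [(hclose x).2, le_ciSup (hbdd t₀ ht₀) x]
  have h₂ : ⨆ x, w t₀ x ≤ (⨆ x, w t x) + ε / 2 :=
    ciSup_le fun x => by linarith [(hclose x).1, le_ciSup (hbdd t ht) x]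
  rw [Real.dist_eq, abs_lt]
  constructor <;> linarith

end SupNormContinuousOn

theorem tsum_mul_mul_sub_tsum_mul_mul_le {ι : Type*} {p μ f₁ f₂ : ι → ℝ} {c : ℝ}
    (hp : ∀ y, 0 ≤ p y) (hμ : ∀ y, 0 ≤ μ y) (hpμ : Summable fun y => p y * μ y)
    (hpμ_le : ∑' y, p y * μ y ≤ 1) (hc : 0 ≤ c)
    (h₁ : Summable fun y => p y * f₁ y * μ y) (h₂ : Summable fun y => p y * f₂ y * μ y)
    (hf : ∀ y, f₁ y - f₂ y ≤ c) :
    ∑' y, p y * f₁ y * μ y - ∑' y, p y * f₂ y * μ y ≤ c := by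
  have hdiff : ∀ y, p y * f₁ y * μ y - p y * f₂ y * μ y = p y * μ y * (f₁ y - f₂ y) :=
    fun y => by ring
  calc ∑' y, p y * f₁ y * μ y - ∑' y, p y * f₂ y * μ y
      = ∑' y, p y * μ y * (f₁ y - f₂ y) := by rw [← h₁.tsum_sub h₂]; exact tsum_congr hdiff
    _ ≤ ∑' y, p y * μ y * c :=
        (h₁.sub h₂).congr hdiff |>.tsum_le_tsum
          (fun y => mul_le_mul_of_nonneg_left (hf y) (mul_nonneg (hp y) (hμ y)))
          (hpμ.mul_right c)
    _ = (∑' y, p y * μ y) * c := tsum_mul_right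
    _ ≤ c := mul_le_of_le_one_left hc hpμ_le

structure IsSubstochasticKernel {V : Type*} (μ : V → ℝ) (P : ℝ → V → V → ℝ) : Prop where
  nonneg : ∀ t, 0 < t → ∀ x y, 0 ≤ P t x y
  summable : ∀ t, 0 < t → ∀ x, Summable fun y => P t x y * μ y
  tsum_le_one : ∀ t, 0 < t → ∀ x, ∑' y, P t x y * μ y ≤ 1

theorem posPart_sub_le_integral_of_duhamel {V : Type*} {μ : V → ℝ} {P : ℝ → V → V → ℝ}
    (hμ : ∀ y, 0 ≤ μ y) (hP : IsSubstochasticKernel μ P)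
    {w₁ w₂ F₁ F₂ : ℝ → V → ℝ} {G : ℝ → ℝ} {t : ℝ} {x : V} (ht : 0 < t)
    (hinit : ∀ y, w₁ 0 y ≤ w₂ 0 y) (hF : ∀ s ∈ Ico 0 t, ∀ y, F₁ s y - F₂ s y ≤ G s)
    (hG : ∀ s ∈ Icc 0 t, 0 ≤ G s) (hGint : IntervalIntegrable G volume 0 t)
    (hs₁ : Summable fun y => P t x y * w₁ 0 y * μ y)
    (hs₂ : Summable fun y => P t x y * w₂ 0 y * μ y)
    (hS₁ : ∀ s ∈ Ico 0 t, Summable fun y => P (t - s) x y * F₁ s y * μ y)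
    (hS₂ : ∀ s ∈ Ico 0 t, Summable fun y => P (t - s) x y * F₂ s y * μ y)
    (hI₁ : IntervalIntegrable (fun s => ∑' y, P (t - s) x y * F₁ s y * μ y) volume 0 t)
    (hI₂ : IntervalIntegrable (fun s => ∑' y, P (t - s) x y * F₂ s y * μ y) volume 0 t)
    (h₁ : w₁ t x ≤ (∑' y, P t x y * w₁ 0 y * μ y) +
      ∫ s in (0 : ℝ)..t, ∑' y, P (t - s) x y * F₁ s y * μ y)
    (h₂ : (∑' y, P t x y * w₂ 0 y * μ y) +
      (∫ s in (0 : ℝ)..t, ∑' y, P (t - s) x y * F₂ s y * μ y) ≤ w₂ t x) :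
    (w₁ t x - w₂ t x)⁺ ≤ ∫ s in (0 : ℝ)..t, G s := by
  have hinit_le : ∑' y, P t x y * w₁ 0 y * μ y - ∑' y, P t x y * w₂ 0 y * μ y ≤ 0 :=
    tsum_mul_mul_sub_tsum_mul_mul_le (hP.nonneg t ht x) hμ (hP.summable t ht x)
      (hP.tsum_le_one t ht x) le_rfl hs₁ hs₂
      fun y => sub_nonpos.2 (hinit y)
  have hforce_le : (∫ s in (0 : ℝ)..t, ∑' y, P (t - s) x y * F₁ s y * μ y) -
      (∫ s in (0 : ℝ)..t, ∑' y, P (t - s) x y * F₂ s y * μ y) ≤ ∫ s in (0 : ℝ)..t, G s := by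
    rw [← intervalIntegral.integral_sub hI₁ hI₂]
    refine intervalIntegral.integral_mono_on_of_le_Ioo ht.le (hI₁.sub hI₂) hGint fun s hs => ?_
    have hs' : s ∈ Ico 0 t := Ioo_subset_Ico_self hs
    have hts : 0 < t - s := sub_pos.2 hs.2
    exact tsum_mul_mul_sub_tsum_mul_mul_le (hP.nonneg _ hts x) hμ (hP.summable _ hts x)
      (hP.tsum_le_one _ hts x) (hG s (Ico_subset_Icc_self hs')) (hS₁ s hs') (hS₂ s hs') (hF s hs')
  exact max_le (by linarith) (intervalIntegral.integral_nonneg ht.le hG)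

theorem posPart_sub_le_mul_integral_of_duhamel {V : Type*} {μ : V → ℝ} {P : ℝ → V → V → ℝ}
    (hμ : ∀ y, 0 ≤ μ y) (hP : IsSubstochasticKernel μ P)
    {w₁ w₂ F₁ F₂ : ℝ → V → ℝ} {φ : ℝ → ℝ} {C T : ℝ} (hC : 0 ≤ C)
    (hφ : ContinuousOn φ (Icc 0 T)) (hφnn : ∀ s ∈ Icc 0 T, 0 ≤ φ s)
    (hF : ∀ s ∈ Icc 0 T, ∀ y, F₁ s y - F₂ s y ≤ C * φ s) (hinit : ∀ y, w₁ 0 y ≤ w₂ 0 y)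
    (hs₁ : ∀ t ∈ Ioc 0 T, ∀ x, Summable fun y => P t x y * w₁ 0 y * μ y)
    (hs₂ : ∀ t ∈ Ioc 0 T, ∀ x, Summable fun y => P t x y * w₂ 0 y * μ y)
    (hS₁ : ∀ t ∈ Ioc 0 T, ∀ x, ∀ s ∈ Ico 0 t, Summable fun y => P (t - s) x y * F₁ s y * μ y)
    (hS₂ : ∀ t ∈ Ioc 0 T, ∀ x, ∀ s ∈ Ico 0 t, Summable fun y => P (t - s) x y * F₂ s y * μ y)
    (hI₁ : ∀ t ∈ Ioc 0 T, ∀ x,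
      IntervalIntegrable (fun s => ∑' y, P (t - s) x y * F₁ s y * μ y) volume 0 t)
    (hI₂ : ∀ t ∈ Ioc 0 T, ∀ x,
      IntervalIntegrable (fun s => ∑' y, P (t - s) x y * F₂ s y * μ y) volume 0 t)
    (h₁ : ∀ t ∈ Ioc 0 T, ∀ x, w₁ t x ≤ (∑' y, P t x y * w₁ 0 y * μ y) +
      ∫ s in (0 : ℝ)..t, ∑' y, P (t - s) x y * F₁ s y * μ y)
    (h₂ : ∀ t ∈ Ioc 0 T, ∀ x, (∑' y, P t x y * w₂ 0 y * μ y) +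
      (∫ s in (0 : ℝ)..t, ∑' y, P (t - s) x y * F₂ s y * μ y) ≤ w₂ t x) :
    ∀ t ∈ Icc 0 T, ∀ x, (w₁ t x - w₂ t x)⁺ ≤ C * ∫ s in (0 : ℝ)..t, φ s := by
  intro t ht x
  rcases ht.1.eq_or_lt with rfl | ht0
  · rw [intervalIntegral.integral_same, mul_zero]
    exact posPart_nonpos.2 (sub_nonpos.2 (hinit x))
  have htT : t ∈ Ioc 0 T := ⟨ht0, ht.2⟩
  have hIcc : Icc 0 t ⊆ Icc 0 T := Icc_subset_Icc le_rfl ht.2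
  rw [← intervalIntegral.integral_const_mul]
  exact posPart_sub_le_integral_of_duhamel hμ hP ht0 hinit
    (fun s hs => hF s (hIcc (Ico_subset_Icc_self hs)))
    (fun s hs => mul_nonneg hC (hφnn s (hIcc hs)))
    (((hφ.mono hIcc).intervalIntegrable_of_Icc ht0.le).const_mul C)
    (hs₁ t htT x) (hs₂ t htT x) (hS₁ t htT x) (hS₂ t htT x) (hI₁ t htT x) (hI₂ t htT x)
    (h₁ t htT x) (h₂ t htT x)

theorem comparison_principle_general {V : Type*} (μ : V → ℝ)
    (hμ : ∀ x, 0 < μ x) (P : ℝ → V → V → ℝ)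
    (hP0 : ∀ t : ℝ, 0 < t → ∀ x y : V, 0 ≤ P t x y)
    (hPsum : ∀ t : ℝ, 0 < t → ∀ x : V, Summable (fun y => P t x y * μ y))
    (hPsub : ∀ t : ℝ, 0 < t → ∀ x : V, (∑' y, P t x y * μ y) ≤ 1)
    (T : ℝ) (q : ℝ) (hq : 1 ≤ q)
    (g : ℝ → ℝ) (hgmono : Monotone g) (L : NNReal) (hgLip : LipschitzWith L g)
    (u₁ u₂ v₁ v₂ : ℝ → V → ℝ) (M : ℝ)
    (hbd : ∀ w ∈ ([u₁, u₂, v₁, v₂] : List (ℝ → V → ℝ)),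
      ∀ t ∈ Set.Icc (0 : ℝ) T, ∀ x, |w t x| ≤ M)
    (hu₁nn : ∀ t ∈ Set.Icc (0 : ℝ) T, ∀ x, 0 ≤ u₁ t x)
    (hu₂nn : ∀ t ∈ Set.Icc (0 : ℝ) T, ∀ x, 0 ≤ u₂ t x)
    (hcont : ∀ w ∈ ([u₁, u₂, v₁, v₂] : List (ℝ → V → ℝ)),
      ∀ t₀ ∈ Set.Icc (0 : ℝ) T, ∀ ε : ℝ, 0 < ε → ∃ δ : ℝ, 0 < δ ∧
        ∀ t ∈ Set.Icc (0 : ℝ) T, |t - t₀| < δ → ∀ x, |w t x - w t₀ x| ≤ ε)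
    -- convergence of the displayed initial-data sums
    (hsum0 : ∀ t ∈ Set.Ioc (0 : ℝ) T, ∀ x : V,
      Summable (fun y => P t x y * u₁ 0 y * μ y) ∧
      Summable (fun y => P t x y * u₂ 0 y * μ y) ∧
      Summable (fun y => P t x y * v₁ 0 y * μ y) ∧
      Summable (fun y => P t x y * v₂ 0 y * μ y))
    -- convergence of the displayed Duhamel sums
    (hsum1 : ∀ t ∈ Set.Ioc (0 : ℝ) T, ∀ x : V, ∀ s ∈ Set.Ico (0 : ℝ) t,
      Summable (fun y => P (t - s) x y * g (v₁ s y) * μ y) ∧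
      Summable (fun y => P (t - s) x y * g (v₂ s y) * μ y) ∧
      Summable (fun y => P (t - s) x y * u₁ s y ^ q * μ y) ∧
      Summable (fun y => P (t - s) x y * u₂ s y ^ q * μ y))
    -- convergence of the displayed time integrals
    (hint : ∀ t ∈ Set.Ioc (0 : ℝ) T, ∀ x : V,
      IntervalIntegrable (fun s => ∑' y, P (t - s) x y * g (v₁ s y) * μ y) volume 0 t ∧
      IntervalIntegrable (fun s => ∑' y, P (t - s) x y * g (v₂ s y) * μ y) volume 0 t ∧
      IntervalIntegrable (fun s => ∑' y, P (t - s) x y * u₁ s y ^ q * μ y) volume 0 t ∧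
      IntervalIntegrable (fun s => ∑' y, P (t - s) x y * u₂ s y ^ q * μ y) volume 0 t)
    (hu₁ : ∀ t ∈ Set.Ioc (0 : ℝ) T, ∀ x : V,
      u₁ t x ≤ (∑' y, P t x y * u₁ 0 y * μ y) +
        ∫ s in (0 : ℝ)..t, ∑' y, P (t - s) x y * g (v₁ s y) * μ y)
    (hv₁ : ∀ t ∈ Set.Ioc (0 : ℝ) T, ∀ x : V,
      v₁ t x ≤ (∑' y, P t x y * v₁ 0 y * μ y) +
        ∫ s in (0 : ℝ)..t, ∑' y, P (t - s) x y * u₁ s y ^ q * μ y)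
    (hu₂ : ∀ t ∈ Set.Ioc (0 : ℝ) T, ∀ x : V,
      (∑' y, P t x y * u₂ 0 y * μ y) +
        (∫ s in (0 : ℝ)..t, ∑' y, P (t - s) x y * g (v₂ s y) * μ y) ≤ u₂ t x)
    (hv₂ : ∀ t ∈ Set.Ioc (0 : ℝ) T, ∀ x : V,
      (∑' y, P t x y * v₂ 0 y * μ y) +
        (∫ s in (0 : ℝ)..t, ∑' y, P (t - s) x y * u₂ s y ^ q * μ y) ≤ v₂ t x)
    (hinitu : ∀ x, u₁ 0 x ≤ u₂ 0 x) (hinitv : ∀ x, v₁ 0 x ≤ v₂ 0 x) :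
    ∀ t ∈ Set.Icc (0 : ℝ) T, ∀ x : V, u₁ t x ≤ u₂ t x ∧ v₁ t x ≤ v₂ t x := by
  intro t ht x
  have : Nonempty V := ⟨x⟩
  simp only [List.forall_mem_cons, List.not_mem_nil, IsEmpty.forall_iff, implies_true,
    and_true] at hbd hcont
  obtain ⟨hbu₁, hbu₂, hbv₁, hbv₂⟩ := hbd
  obtain ⟨hcu₁, hcu₂, hcv₁, hcv₂⟩ : SupNormContinuousOn u₁ (Icc 0 T) ∧
    SupNormContinuousOn u₂ (Icc 0 T) ∧ SupNormContinuousOn v₁ (Icc 0 T) ∧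
    SupNormContinuousOn v₂ (Icc 0 T) := hcont
  set ψ : ℝ → V → ℝ := fun s y => max (u₁ s y - u₂ s y)⁺ (v₁ s y - v₂ s y)⁺
  set φ : ℝ → ℝ := fun s => ⨆ y, ψ s y
  have hbdd : ∀ s ∈ Icc 0 T, BddAbove (range (ψ s)) := fun s hs =>
    ⟨2 * M, forall_mem_range.2 fun y => by
      have := abs_le.1 (hbu₁ s hs y); have := abs_le.1 (hbu₂ s hs y)
      have := abs_le.1 (hbv₁ s hs y); have := abs_le.1 (hbv₂ s hs y)
      exact max_le (max_le (by linarith) (by linarith)) (max_le (by linarith) (by linarith))⟩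
  have hψφ : ∀ s ∈ Icc 0 T, ∀ y, ψ s y ≤ φ s := fun s hs => le_ciSup (hbdd s hs)
  have hφnn : ∀ s ∈ Icc 0 T, 0 ≤ φ s := fun s hs =>
    (le_max_of_le_left (posPart_nonneg _)).trans (hψφ s hs x)
  have hφcont : ContinuousOn φ (Icc 0 T) :=
    SupNormContinuousOn.continuousOn_iSup
      (((hcu₁.sub hcu₂).posPart).max ((hcv₁.sub hcv₂).posPart)) hbdd
  set C : ℝ≥0 := L + (q * M ^ (q - 1)).toNNReal
  have hg : ∀ s ∈ Icc 0 T, ∀ y, g (v₁ s y) - g (v₂ s y) ≤ C * φ s := fun s hs y =>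
    ((hgmono.monotoneOn univ).sub_le_mul_posPart hgLip.lipschitzOnWith trivial trivial).trans <|
      mul_le_mul (by exact_mod_cast le_self_add) ((le_max_right _ _).trans (hψφ s hs y))
        (posPart_nonneg _) C.2
  have hpow : ∀ s ∈ Icc 0 T, ∀ y, u₁ s y ^ q - u₂ s y ^ q ≤ C * φ s := fun s hs y =>
    (rpow_sub_rpow_le_mul_posPart hq ⟨hu₁nn s hs y, le_of_abs_le (hbu₁ s hs y)⟩
      ⟨hu₂nn s hs y, le_of_abs_le (hbu₂ s hs y)⟩).trans <|
      mul_le_mul (by exact_mod_cast le_add_self) ((le_max_left _ _).trans (hψφ s hs y))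
        (posPart_nonneg _) C.2
  have hμ' : ∀ y, 0 ≤ μ y := fun y => (hμ y).le
  have hK : IsSubstochasticKernel μ P := ⟨hP0, hPsum, hPsub⟩
  have hu_le := posPart_sub_le_mul_integral_of_duhamel hμ' hK C.2 hφcont hφnn hg hinitu
    (fun t ht x => (hsum0 t ht x).1) (fun t ht x => (hsum0 t ht x).2.1)
    (fun t ht x s hs => (hsum1 t ht x s hs).1) (fun t ht x s hs => (hsum1 t ht x s hs).2.1)
    (fun t ht x => (hint t ht x).1) (fun t ht x => (hint t ht x).2.1) hu₁ hu₂
  have hv_le := posPart_sub_le_mul_integral_of_duhamel hμ' hK C.2 hφcont hφnn hpow hinitv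
    (fun t ht x => (hsum0 t ht x).2.2.1) (fun t ht x => (hsum0 t ht x).2.2.2)
    (fun t ht x s hs => (hsum1 t ht x s hs).2.2.1) (fun t ht x s hs => (hsum1 t ht x s hs).2.2.2)
    (fun t ht x => (hint t ht x).2.2.1) (fun t ht x => (hint t ht x).2.2.2) hv₁ hv₂
  have key : ∀ s ∈ Icc 0 T, φ s ≤ C * ∫ r in (0 : ℝ)..s, φ r := fun s hs =>
    ciSup_le fun y => max_le (hu_le s hs y) (hv_le s hs y)
  have hψ := (hψφ t ht x).trans (nonpos_of_le_mul_integral C.2 hφcont key t ht)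
  exact ⟨sub_nonpos.1 ((le_posPart _).trans ((le_max_left _ _).trans hψ)),
    sub_nonpos.1 ((le_posPart _).trans ((le_max_right _ _).trans hψ))⟩

/-- Lemma 3.10: comparison principle for the integral formulation of the weakly
coupled parabolic system driven by a nonnegative sub-stochastic kernel `P`. -/
theorem comparison_principle {V : Type*} [Countable V] (μ : V → ℝ)
    (hμ : ∀ x, 0 < μ x) (P : ℝ → V → V → ℝ)
    (hP0 : ∀ t : ℝ, 0 < t → ∀ x y : V, 0 ≤ P t x y)
    (hPsum : ∀ t : ℝ, 0 < t → ∀ x : V, Summable (fun y => P t x y * μ y))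
    (hPsub : ∀ t : ℝ, 0 < t → ∀ x : V, (∑' y, P t x y * μ y) ≤ 1)
    (T : ℝ) (hT : 0 < T) (q : ℝ) (hq : 1 ≤ q)
    (g : ℝ → ℝ) (hgmono : Monotone g) (L : NNReal) (hgLip : LipschitzWith L g)
    (u₁ u₂ v₁ v₂ : ℝ → V → ℝ) (M : ℝ)
    (hbd : ∀ w ∈ ([u₁, u₂, v₁, v₂] : List (ℝ → V → ℝ)),
      ∀ t ∈ Set.Icc (0 : ℝ) T, ∀ x, |w t x| ≤ M)
    (hu₁nn : ∀ t ∈ Set.Icc (0 : ℝ) T, ∀ x, 0 ≤ u₁ t x)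
    (hu₂nn : ∀ t ∈ Set.Icc (0 : ℝ) T, ∀ x, 0 ≤ u₂ t x)
    (hcont : ∀ w ∈ ([u₁, u₂, v₁, v₂] : List (ℝ → V → ℝ)),
      ∀ t₀ ∈ Set.Icc (0 : ℝ) T, ∀ ε : ℝ, 0 < ε → ∃ δ : ℝ, 0 < δ ∧
        ∀ t ∈ Set.Icc (0 : ℝ) T, |t - t₀| < δ → ∀ x, |w t x - w t₀ x| ≤ ε)
    -- convergence of the displayed initial-data sums
    (hsum0 : ∀ t ∈ Set.Ioc (0 : ℝ) T, ∀ x : V,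
      Summable (fun y => P t x y * u₁ 0 y * μ y) ∧
      Summable (fun y => P t x y * u₂ 0 y * μ y) ∧
      Summable (fun y => P t x y * v₁ 0 y * μ y) ∧
      Summable (fun y => P t x y * v₂ 0 y * μ y))
    -- convergence of the displayed Duhamel sums
    (hsum1 : ∀ t ∈ Set.Ioc (0 : ℝ) T, ∀ x : V, ∀ s ∈ Set.Ico (0 : ℝ) t,
      Summable (fun y => P (t - s) x y * g (v₁ s y) * μ y) ∧
      Summable (fun y => P (t - s) x y * g (v₂ s y) * μ y) ∧
      Summable (fun y => P (t - s) x y * u₁ s y ^ q * μ y) ∧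
      Summable (fun y => P (t - s) x y * u₂ s y ^ q * μ y))
    -- convergence of the displayed time integrals
    (hint : ∀ t ∈ Set.Ioc (0 : ℝ) T, ∀ x : V,
      IntervalIntegrable (fun s => ∑' y, P (t - s) x y * g (v₁ s y) * μ y) volume 0 t ∧
      IntervalIntegrable (fun s => ∑' y, P (t - s) x y * g (v₂ s y) * μ y) volume 0 t ∧
      IntervalIntegrable (fun s => ∑' y, P (t - s) x y * u₁ s y ^ q * μ y) volume 0 t ∧
      IntervalIntegrable (fun s => ∑' y, P (t - s) x y * u₂ s y ^ q * μ y) volume 0 t)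
    (hu₁ : ∀ t ∈ Set.Ioc (0 : ℝ) T, ∀ x : V,
      u₁ t x ≤ (∑' y, P t x y * u₁ 0 y * μ y) +
        ∫ s in (0 : ℝ)..t, ∑' y, P (t - s) x y * g (v₁ s y) * μ y)
    (hv₁ : ∀ t ∈ Set.Ioc (0 : ℝ) T, ∀ x : V,
      v₁ t x ≤ (∑' y, P t x y * v₁ 0 y * μ y) +
        ∫ s in (0 : ℝ)..t, ∑' y, P (t - s) x y * u₁ s y ^ q * μ y)
    (hu₂ : ∀ t ∈ Set.Ioc (0 : ℝ) T, ∀ x : V,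
      (∑' y, P t x y * u₂ 0 y * μ y) +
        (∫ s in (0 : ℝ)..t, ∑' y, P (t - s) x y * g (v₂ s y) * μ y) ≤ u₂ t x)
    (hv₂ : ∀ t ∈ Set.Ioc (0 : ℝ) T, ∀ x : V,
      (∑' y, P t x y * v₂ 0 y * μ y) +
        (∫ s in (0 : ℝ)..t, ∑' y, P (t - s) x y * u₂ s y ^ q * μ y) ≤ v₂ t x)
    (hinitu : ∀ x, u₁ 0 x ≤ u₂ 0 x) (hinitv : ∀ x, v₁ 0 x ≤ v₂ 0 x) :
    ∀ t ∈ Set.Icc (0 : ℝ) T, ∀ x : V, u₁ t x ≤ u₂ t x ∧ v₁ t x ≤ v₂ t x :=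
  comparison_principle_general μ hμ P hP0 hPsum hPsub T q hq g hgmono L hgLip u₁ u₂ v₁ v₂ M hbd
    hu₁nn hu₂nn hcont hsum0 hsum1 hint hu₁ hv₁ hu₂ hv₂ hinitu hinitv
end

section
/- Let V, ω, μ, D, N(x) and the graph Laplacian Δ be as follows: ω : V → V → ℝ nonnegative, μ : V → ℝ positive, every neighbor set N(x) = { y : ω x y ≠ 0 } finite, ∑_{y ∈ N(x)} ω x y ≤ D · μ(x) for all x, and (Δf)(x) = (1/μ(x)) ∑_{y ∈ N(x)} ω x y (f(y) − f(x)). Let u₀ : V → ℝ with |u₀(x)| ≤ B for all x (B ≥ 0). Then for all real t ≥ 0 and δ ≥ 0 and every x ∈ V, the series ∑_{k=0}^∞ ((t+δ)^k − t^k)/k! · (Δ^k u₀)(x) converges absolutely and its sum has absolute value at most B · ( e^{2D(t+δ)} − e^{2Dt} ). -/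
/-!
Each application of `Δ` at most multiplies the sup norm by `2D`, since `|f y - f x| ≤ 2‖f‖∞` and
the weights at `x` sum to at most `D μ(x)`. Hence `|Δ^k u₀| ≤ (2D)^k B`, and the series is
dominated termwise by `B ((2D(t+δ))^k - (2Dt)^k) / k!`, whose sum is `B (e^{2D(t+δ)} - e^{2Dt})`.
-/

/-- The graph Laplacian `(Δf)(x) = (1/μ(x)) ∑_{y ∈ N(x)} ω(x,y)(f(y) − f(x))`
on a locally finite weighted graph. -/
noncomputable def graphLaplacian {V : Type*} (ω : V → V → ℝ) (μ : V → ℝ)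
    (hfin : ∀ x : V, {y : V | ω x y ≠ 0}.Finite) (f : V → ℝ) (x : V) : ℝ :=
  (1 / μ x) * ∑ y ∈ (hfin x).toFinset, ω x y * (f y - f x)

section GraphLaplacian

variable {V : Type*} {ω : V → V → ℝ} {μ : V → ℝ} {hfin : ∀ x : V, {y : V | ω x y ≠ 0}.Finite}
  {D : ℝ}

theorem abs_graphLaplacian_le (hω : ∀ x y, 0 ≤ ω x y) (hμ : ∀ x, 0 < μ x)
    (hDμ : ∀ x : V, (∑ y ∈ (hfin x).toFinset, ω x y) ≤ D * μ x)
    {f : V → ℝ} {C : ℝ} (hf : ∀ y, |f y| ≤ C) (x : V) :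
    |graphLaplacian ω μ hfin f x| ≤ 2 * D * C := by
  have hC : 0 ≤ C := (abs_nonneg _).trans (hf x)
  have hsum : |∑ y ∈ (hfin x).toFinset, ω x y * (f y - f x)| ≤ D * μ x * (2 * C) :=
    calc |∑ y ∈ (hfin x).toFinset, ω x y * (f y - f x)|
        ≤ ∑ y ∈ (hfin x).toFinset, ω x y * (2 * C) := by
          refine (Finset.abs_sum_le_sum_abs _ _).trans (Finset.sum_le_sum fun y _ => ?_)
          rw [abs_mul, abs_of_nonneg (hω x y)]
          gcongr
          · exact hω x y
          · linarith [abs_sub (f y) (f x), hf y, hf x]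
      _ = (∑ y ∈ (hfin x).toFinset, ω x y) * (2 * C) := (Finset.sum_mul _ _ _).symm
      _ ≤ D * μ x * (2 * C) := by gcongr; exact hDμ x
  have hμx := hμ x
  calc |graphLaplacian ω μ hfin f x|
      = 1 / μ x * |∑ y ∈ (hfin x).toFinset, ω x y * (f y - f x)| := by
        rw [graphLaplacian, abs_mul, abs_of_pos (one_div_pos.mpr hμx)]
    _ ≤ 1 / μ x * (D * μ x * (2 * C)) := by gcongr
    _ = 2 * D * C := by field_simp

theorem abs_iterate_graphLaplacian_le (hω : ∀ x y, 0 ≤ ω x y) (hμ : ∀ x, 0 < μ x)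
    (hDμ : ∀ x : V, (∑ y ∈ (hfin x).toFinset, ω x y) ≤ D * μ x)
    {u : V → ℝ} {B : ℝ} (hu : ∀ x, |u x| ≤ B) (k : ℕ) (x : V) :
    |(graphLaplacian ω μ hfin)^[k] u x| ≤ (2 * D) ^ k * B := by
  induction k generalizing x with
  | zero => simpa using hu x
  | succ k ih =>
    rw [Function.iterate_succ_apply', pow_succ', mul_assoc]
    exact abs_graphLaplacian_le hω hμ hDμ ih x

end GraphLaplacian

theorem Real.hasSum_pow_div_factorial (x : ℝ) :
    HasSum (fun n : ℕ => x ^ n / n.factorial) (Real.exp x) := by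
  rw [Real.exp_eq_exp_ℝ]
  exact NormedSpace.expSeries_div_hasSum_exp x

theorem hasSum_mul_sub_pow_div_factorial (B r s t : ℝ) :
    HasSum (fun k : ℕ => B * ((r * s) ^ k / k.factorial - (r * t) ^ k / k.factorial))
      (B * (Real.exp (r * s) - Real.exp (r * t))) :=
  ((Real.hasSum_pow_div_factorial _).sub (Real.hasSum_pow_div_factorial _)).mul_left B

theorem abs_pow_sub_pow_div_factorial_mul_le {s t r B a : ℝ} (ht : 0 ≤ t) (hts : t ≤ s) (k : ℕ)
    (ha : |a| ≤ r ^ k * B) :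
    |(s ^ k - t ^ k) / k.factorial * a| ≤
      B * ((r * s) ^ k / k.factorial - (r * t) ^ k / k.factorial) := by
  have hcoeff : 0 ≤ (s ^ k - t ^ k) / k.factorial :=
    div_nonneg (sub_nonneg.mpr (pow_le_pow_left₀ ht hts k)) k.factorial.cast_nonneg
  calc |(s ^ k - t ^ k) / k.factorial * a|
      = (s ^ k - t ^ k) / k.factorial * |a| := by rw [abs_mul, abs_of_nonneg hcoeff]
    _ ≤ (s ^ k - t ^ k) / k.factorial * (r ^ k * B) := by gcongr
    _ = B * ((r * s) ^ k / k.factorial - (r * t) ^ k / k.factorial) := by ring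

theorem heat_series_increment_bound_general {V : Type*} (ω : V → V → ℝ) (μ : V → ℝ)
    (hω : ∀ x y, 0 ≤ ω x y) (hμ : ∀ x, 0 < μ x)
    (hfin : ∀ x : V, {y : V | ω x y ≠ 0}.Finite)
    (D : ℝ)
    (hDμ : ∀ x : V, (∑ y ∈ (hfin x).toFinset, ω x y) ≤ D * μ x)
    (u₀ : V → ℝ) (B : ℝ) (hu₀ : ∀ x, |u₀ x| ≤ B)
    (t δ : ℝ) (ht : 0 ≤ t) (hδ : 0 ≤ δ) (x : V) :
    Summable (fun k : ℕ =>
      |((t + δ) ^ k - t ^ k) / (k.factorial : ℝ) *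
        ((graphLaplacian ω μ hfin)^[k] u₀ x)|) ∧
    |∑' k : ℕ, ((t + δ) ^ k - t ^ k) / (k.factorial : ℝ) *
        ((graphLaplacian ω μ hfin)^[k] u₀ x)| ≤
      B * (Real.exp (2 * D * (t + δ)) - Real.exp (2 * D * t)) := by
  have hmajorant := hasSum_mul_sub_pow_div_factorial B (2 * D) (t + δ) t
  have hterm (k : ℕ) := abs_pow_sub_pow_div_factorial_mul_le ht (le_add_of_nonneg_right hδ) k
    (abs_iterate_graphLaplacian_le hω hμ hDμ hu₀ k x)
  refine ⟨hmajorant.summable.of_nonneg_of_le (fun _ => abs_nonneg _) hterm, ?_⟩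
  rw [← Real.norm_eq_abs]
  exact tsum_of_norm_bounded hmajorant hterm

/-- Inequality (3.21): the series `∑ ((t+δ)^k − t^k)/k! · Δ^k u₀(x)` converges
absolutely and is bounded by `B (e^{2D(t+δ)} − e^{2Dt})`. -/
theorem heat_series_increment_bound {V : Type*} (ω : V → V → ℝ) (μ : V → ℝ)
    (hω : ∀ x y, 0 ≤ ω x y) (hμ : ∀ x, 0 < μ x)
    (hfin : ∀ x : V, {y : V | ω x y ≠ 0}.Finite)
    (D : ℝ) (hD : 0 ≤ D)
    (hDμ : ∀ x : V, (∑ y ∈ (hfin x).toFinset, ω x y) ≤ D * μ x)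
    (u₀ : V → ℝ) (B : ℝ) (hB : 0 ≤ B) (hu₀ : ∀ x, |u₀ x| ≤ B)
    (t δ : ℝ) (ht : 0 ≤ t) (hδ : 0 ≤ δ) (x : V) :
    Summable (fun k : ℕ =>
      |((t + δ) ^ k - t ^ k) / (k.factorial : ℝ) *
        ((graphLaplacian ω μ hfin)^[k] u₀ x)|) ∧
    |∑' k : ℕ, ((t + δ) ^ k - t ^ k) / (k.factorial : ℝ) *
        ((graphLaplacian ω μ hfin)^[k] u₀ x)| ≤
      B * (Real.exp (2 * D * (t + δ)) - Real.exp (2 * D * t)) :=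
  heat_series_increment_bound_general ω μ hω hμ hfin D hDμ u₀ B hu₀ t δ ht hδ x
end
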